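/- arXiv:1803.04441 — 7 statements merged into one kernel-verified Lean document; each statement's English description precedes it below -/
import Mathlib

section
/- (𝒥(R), ∘) is a loop with unit element t: t ∘ f = f = f ∘ t for all f ∈ 𝒥(R); for all f, h ∈ 𝒥(R) there is a unique g ∈ 𝒥(R) with f ∘ g = h; and for all g, h ∈ 𝒥(R) there is a unique f ∈ 𝒥(R) with f ∘ g = h. -/
open PowerSeries

/-- The set `𝒥(R)` of formal power series `t + ∑_{i≥1} α_i t^{i+1}`:
zero constant term and coefficient of `t` equal to `1`. -/
def Jset (R : Type*) [Ring R] : Set (PowerSeries R) :=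
  {f | coeff 0 f = 0 ∧ coeff 1 f = 1}

/-- The substitution product `f ∘ g = ∑_{m ≥ 0} α_m g^{m+1}`, where `α_m` is the
coefficient of `t^{m+1}` in `f`, defined coefficientwise (for `g` with zero constant
term, `g^{m+1}` has order at least `m+1`, so only `m < k` contributes in degree `k`). -/
noncomputable def Jcomp {R : Type*} [Ring R] (f g : PowerSeries R) : PowerSeries R :=
  PowerSeries.mk fun k => ∑ m ∈ Finset.range k, coeff (m + 1) f * coeff k (g ^ (m + 1))

/-!
For fixed `f` with `f_1 = 1`, the coefficient of `t^k` in `f ∘ g` is `g_k` plus a polynomial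
in `g_1, …, g_{k-1}`; for fixed `g` with `g_1 = 1` it is `f_k` plus a polynomial in
`f_1, …, f_{k-1}`. Hence `u ↦ u - T u`, for `T` either `f ∘ ·` or `· ∘ g`, strictly raises the
`X`-adic order of differences of series without constant term, so `T u = h` is a fixed-point
problem for an `X`-adic contraction and has exactly one solution, found coefficient by
coefficient. The coefficient of `t` in `f ∘ g` is `f_1 g_1`, which keeps everything in `𝒥(R)`.
-/

namespace PowerSeries

variable {R : Type*} [Ring R]

theorem coeff_eq_of_lt_order_sub {u v : R⟦X⟧} {k : ℕ} (h : (k : ℕ∞) < order (u - v)) :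
    coeff k u = coeff k v :=
  sub_eq_zero.mp (by simpa using coeff_of_lt_order k h)

theorem order_sub_add_le_order_pow_sub_pow {u v : R⟦X⟧} (hu : constantCoeff u = 0)
    (hv : constantCoeff v = 0) (n : ℕ) :
    order (u - v) + n ≤ order (u ^ (n + 1) - v ^ (n + 1)) := by
  induction n with
  | zero => simp
  | succ n ih =>
    have hsplit : u ^ (n + 2) - v ^ (n + 2) =
        u * (u ^ (n + 1) - v ^ (n + 1)) + (u - v) * v ^ (n + 1) := by
      rw [pow_succ' u, pow_succ' v, mul_sub, sub_mul]; abel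
    rw [hsplit]
    refine le_trans (le_min ?_ ?_) (min_order_le_order_add _ _)
    · calc order (u - v) + ↑(n + 1) = 1 + (order (u - v) + n) := by push_cast; ring
        _ ≤ order u + order (u ^ (n + 1) - v ^ (n + 1)) :=
          add_le_add (one_le_order_iff_constCoeff_eq_zero.mpr hu) ih
        _ ≤ _ := le_order_mul _ _
    · exact (add_le_add le_rfl (le_order_pow_of_constantCoeff_eq_zero _ hv)).trans
        (le_order_mul _ _)

theorem coeff_self_pow {g : R⟦X⟧} (hg : constantCoeff g = 0) (n : ℕ) :
    coeff n (g ^ n) = coeff 1 g ^ n := by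
  have hX : g = X * mk fun p => coeff (p + 1) g := by
    simpa [hg] using eq_X_mul_shift_add_const g
  rw [hX, (commute_X _).symm.mul_pow, coeff_X_pow_mul']
  simp

noncomputable def fixedPointCoeff (Φ : R⟦X⟧ → R⟦X⟧) (k : ℕ) : R :=
  coeff k (Φ (mk fun i => if i < k then fixedPointCoeff Φ i else 0))

theorem existsUnique_fixedPoint_of_add_one_le_order {Φ : R⟦X⟧ → R⟦X⟧}
    (hΦ : ∀ u v, order (u - v) + 1 ≤ order (Φ u - Φ v)) : ∃! u, Φ u = u := by
  set w := mk (fixedPointCoeff Φ)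
  have hw : Φ w = w := by
    ext k
    set t : R⟦X⟧ := mk fun i => if i < k then fixedPointCoeff Φ i else 0
    have hwt : (k : ℕ∞) ≤ order (w - t) := nat_le_order _ _ fun i hi => by simp [w, t, hi]
    have hk : (k : ℕ∞) < order (Φ w - Φ t) :=
      (ENat.natCast_lt_add_one_iff.mpr hwt).trans_le (hΦ w t)
    rw [coeff_eq_of_lt_order_sub hk, coeff_mk, fixedPointCoeff]
  refine ⟨w, hw, fun v hv => ?_⟩
  by_contra hvw
  have hne : order (v - w) ≠ ⊤ := by simpa [order_eq_top, sub_eq_zero] using hvw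
  have hcontr := hΦ v w
  rw [hv, hw] at hcontr
  exact ((ENat.add_one_le_iff hne).mp hcontr).false

def IsXAdicContraction (Φ : R⟦X⟧ → R⟦X⟧) : Prop :=
  ∀ u v, constantCoeff u = 0 → constantCoeff v = 0 → order (u - v) + 1 ≤ order (Φ u - Φ v)

theorem existsUnique_fixedPoint_of_isXAdicContraction {Φ : R⟦X⟧ → R⟦X⟧}
    (hΦ0 : ∀ u, constantCoeff u = 0 → constantCoeff (Φ u) = 0) (hΦ : IsXAdicContraction Φ) :
    ∃! u, constantCoeff u = 0 ∧ Φ u = u := by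
  -- Killing the constant term first turns `Φ` into a contraction of all of `R⟦X⟧`.
  let τ (u : R⟦X⟧) : R⟦X⟧ := u - C (constantCoeff u)
  have hτ0 (u : R⟦X⟧) : constantCoeff (τ u) = 0 := by simp [τ]
  have hτ_eq {u : R⟦X⟧} (hu : constantCoeff u = 0) : τ u = u := by simp [τ, hu]
  have hτ_order (u v : R⟦X⟧) : order (u - v) ≤ order (τ u - τ v) :=
    le_order _ _ fun i hi => by
      rcases i with _ | i
      · simp [τ]
      · simpa [τ, coeff_C] using coeff_of_lt_order _ hi
  obtain ⟨u, hu, huniq⟩ := existsUnique_fixedPoint_of_add_one_le_order (Φ := Φ ∘ τ)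
    fun u v => (add_le_add_left (hτ_order u v) 1).trans (hΦ _ _ (hτ0 u) (hτ0 v))
  have hu0 : constantCoeff u = 0 := hu ▸ hΦ0 _ (hτ0 u)
  refine ⟨u, ⟨hu0, by simpa [hτ_eq hu0] using hu⟩, fun v ⟨hv0, hv⟩ => huniq v ?_⟩
  simp [hτ_eq hv0, hv]

theorem existsUnique_apply_eq_of_isXAdicContraction_sub {T : R⟦X⟧ → R⟦X⟧}
    (hT0 : ∀ u, constantCoeff u = 0 → constantCoeff (T u) = 0)
    (hT : IsXAdicContraction fun u => u - T u) {h : R⟦X⟧} (hh : constantCoeff h = 0) :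
    ∃! u, constantCoeff u = 0 ∧ T u = h := by
  have hΦ : IsXAdicContraction fun u => h + (u - T u) := fun u v hu hv => by
    simpa only [add_sub_add_left_eq_sub] using hT u v hu hv
  have hΦ0 (u : R⟦X⟧) (hu : constantCoeff u = 0) : constantCoeff (h + (u - T u)) = 0 := by
    simp [hh, hu, hT0 u hu]
  refine (existsUnique_congr fun u => and_congr_right fun _ => ?_).mp
    (existsUnique_fixedPoint_of_isXAdicContraction hΦ0 hΦ)
  rw [add_sub_left_comm, add_eq_left, sub_eq_zero, eq_comm]

end PowerSeries

section Jcomp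

variable {R : Type*} [Ring R]

theorem mem_Jset_iff {f : R⟦X⟧} : f ∈ Jset R ↔ constantCoeff f = 0 ∧ coeff 1 f = 1 := by
  simp [Jset]

@[simp]
theorem coeff_Jcomp (f g : R⟦X⟧) (k : ℕ) :
    coeff k (Jcomp f g) = ∑ m ∈ Finset.range k, coeff (m + 1) f * coeff k (g ^ (m + 1)) :=
  coeff_mk _ _

theorem constantCoeff_Jcomp (f g : R⟦X⟧) : constantCoeff (Jcomp f g) = 0 := by
  rw [← coeff_zero_eq_constantCoeff_apply, coeff_Jcomp, Finset.sum_range_zero]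

theorem coeff_one_Jcomp (f g : R⟦X⟧) : coeff 1 (Jcomp f g) = coeff 1 f * coeff 1 g := by
  simp

theorem X_Jcomp {f : R⟦X⟧} (hf : constantCoeff f = 0) : Jcomp X f = f := by
  ext (_ | k)
  · simp [hf]
  · simp [coeff_X]

theorem Jcomp_X {f : R⟦X⟧} (hf : constantCoeff f = 0) : Jcomp f X = f := by
  ext (_ | k)
  · simp [hf]
  · simp [coeff_X_pow]

theorem Jcomp_mem_Jset {f g : R⟦X⟧} (hf : coeff 1 f = 1) (hg : coeff 1 g = 1) :
    Jcomp f g ∈ Jset R :=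
  mem_Jset_iff.mpr ⟨constantCoeff_Jcomp f g, by rw [coeff_one_Jcomp, hf, hg, one_mul]⟩

theorem isXAdicContraction_sub_Jcomp_left {g : R⟦X⟧} (hg0 : constantCoeff g = 0)
    (hg1 : coeff 1 g = 1) : IsXAdicContraction fun f => f - Jcomp f g := by
  intro u v hu hv
  refine le_order _ _ fun i hi => ?_
  replace hi : (i : ℕ∞) ≤ order (u - v) := ENat.natCast_lt_add_one_iff.mp hi
  rcases i with _ | n
  · simp [hu, hv, constantCoeff_Jcomp]
  · have hlow : ∀ m ∈ Finset.range n, coeff (m + 1) u * coeff (n + 1) (g ^ (m + 1)) =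
        coeff (m + 1) v * coeff (n + 1) (g ^ (m + 1)) := fun m hm => by
      rw [coeff_eq_of_lt_order_sub (lt_of_lt_of_le (by simpa using hm) hi)]
    simp only [map_sub, coeff_Jcomp, Finset.sum_range_succ, Finset.sum_congr rfl hlow,
      coeff_self_pow hg0, hg1, one_pow, mul_one]
    abel

theorem isXAdicContraction_sub_Jcomp_right {f : R⟦X⟧} (hf : coeff 1 f = 1) :
    IsXAdicContraction fun g => g - Jcomp f g := by
  intro u v hu hv
  refine le_order _ _ fun i hi => ?_
  replace hi : (i : ℕ∞) ≤ order (u - v) := ENat.natCast_lt_add_one_iff.mp hi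
  rcases i with _ | n
  · simp [hu, hv, constantCoeff_Jcomp]
  · have hhigh (m : ℕ) : coeff (n + 1) (u ^ (m + 2)) = coeff (n + 1) (v ^ (m + 2)) :=
      coeff_eq_of_lt_order_sub <| calc
        ((n + 1 : ℕ) : ℕ∞) < ↑(n + 1) + ↑(m + 1) := by norm_cast; omega
        _ ≤ order (u - v) + ↑(m + 1) := by gcongr
        _ ≤ _ := order_sub_add_le_order_pow_sub_pow hu hv (m + 1)
    simp only [map_sub, coeff_Jcomp, Finset.sum_range_succ', hhigh, hf, zero_add, pow_one,
      one_mul]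
    abel

theorem existsUnique_Jcomp_right_eq {f h : R⟦X⟧} (hf : f ∈ Jset R) (hh : h ∈ Jset R) :
    ∃! g, g ∈ Jset R ∧ Jcomp f g = h := by
  rw [mem_Jset_iff] at hf hh
  refine (existsUnique_congr fun g => ?_).mp <| existsUnique_apply_eq_of_isXAdicContraction_sub
    (fun g _ => constantCoeff_Jcomp f g) (isXAdicContraction_sub_Jcomp_right hf.2) hh.1
  rw [mem_Jset_iff, and_assoc]
  refine and_congr_right fun _ => ⟨fun hg => ⟨?_, hg⟩, And.right⟩
  rw [← hh.2, ← hg, coeff_one_Jcomp, hf.2, one_mul]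

theorem existsUnique_Jcomp_left_eq {g h : R⟦X⟧} (hg : g ∈ Jset R) (hh : h ∈ Jset R) :
    ∃! f, f ∈ Jset R ∧ Jcomp f g = h := by
  rw [mem_Jset_iff] at hg hh
  refine (existsUnique_congr fun f => ?_).mp <| existsUnique_apply_eq_of_isXAdicContraction_sub
    (fun f _ => constantCoeff_Jcomp f g) (isXAdicContraction_sub_Jcomp_left hg.1 hg.2) hh.1
  rw [mem_Jset_iff, and_assoc]
  refine and_congr_right fun _ => ⟨fun hf => ⟨?_, hf⟩, And.right⟩
  rw [← hh.2, ← hf, coeff_one_Jcomp, hg.2, mul_one]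

end Jcomp

/-- `(𝒥(R), ∘)` is a loop with unit element `t`. -/
theorem statement0 (R : Type*) [Ring R] :
    (∀ f ∈ Jset R, Jcomp (X : PowerSeries R) f = f ∧ Jcomp f (X : PowerSeries R) = f) ∧
    (∀ f ∈ Jset R, ∀ g ∈ Jset R, Jcomp f g ∈ Jset R) ∧
    (∀ f ∈ Jset R, ∀ h ∈ Jset R, ∃! g, g ∈ Jset R ∧ Jcomp f g = h) ∧
    (∀ g ∈ Jset R, ∀ h ∈ Jset R, ∃! f, f ∈ Jset R ∧ Jcomp f g = h) := by
  refine ⟨fun f hf => ?_, fun f hf g hg => ?_, fun f hf h hh => existsUnique_Jcomp_right_eq hf hh,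
    fun g hg h hh => existsUnique_Jcomp_left_eq hg hh⟩
  · have hf0 := (mem_Jset_iff.mp hf).1
    exact ⟨X_Jcomp hf0, Jcomp_X hf0⟩
  · exact Jcomp_mem_Jset hf.2 hg.2
end

section
/- The substitution product ∘ on 𝒥(R) is associative — equivalently, (𝒥(R), ∘) is a group — if and only if R[R,R] = 0, i.e. α(βγ − γβ) = 0 for all α, β, γ ∈ R. -/
open PowerSeries

/-!
If `R` is commutative, `f ∘ g` is the usual substitution `f(g)`, which is associative.
In general `f ∘ g = ∑ α_m g^{m+1}` keeps the coefficients of `f` to the left of the powers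
of `g`, so for `f = t + α t^2` associativity reads `α ((g^2) ∘ h - (g ∘ h)^2) = 0`. For
`g = t + β t^2` and `h = t + γ t^2` the coefficient of `t^4` of the left-hand side is
`α(βγ - γβ)`. Finally `R[R,R] = 0` forces `R` to be commutative, taking `α = 1`.
-/

namespace PowerSeries

section Ring
variable {R : Type*} [Ring R]

theorem coeff_pow_eq_zero_of_lt {φ : R⟦X⟧} (hφ : constantCoeff φ = 0) {k n : ℕ}
    (h : k < n) : coeff k (φ ^ n) = 0 :=
  coeff_of_lt_order k ((Nat.cast_lt.mpr h).trans_le (le_order_pow_of_constantCoeff_eq_zero n hφ))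

theorem coeff_Jcomp (f g : R⟦X⟧) (k : ℕ) :
    coeff k (Jcomp f g) = ∑ m ∈ Finset.range k, coeff (m + 1) f * coeff k (g ^ (m + 1)) :=
  coeff_mk k _

theorem Jcomp_X_add_C_mul_X_sq (a : R) {g : R⟦X⟧} (hg : constantCoeff g = 0) :
    Jcomp (X + C a * X ^ 2) g = g + C a * g ^ 2 := by
  ext k
  rcases k with _ | _ | k
  · simp [coeff_Jcomp, hg, coeff_pow_eq_zero_of_lt hg]
  · simp [coeff_Jcomp, coeff_pow_eq_zero_of_lt hg]
  · rw [coeff_Jcomp, Finset.sum_range_succ', Finset.sum_range_succ']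
    simpa [coeff_X] using add_comm _ _

theorem coeff_two_sq {u : R⟦X⟧} (hu : constantCoeff u = 0) :
    coeff 2 (u ^ 2) = coeff 1 u * coeff 1 u := by
  simp [sq, coeff_mul, Finset.Nat.sum_antidiagonal_eq_sum_range_succ_mk, Finset.sum_range_succ,
    hu]

theorem coeff_three_sq {u : R⟦X⟧} (hu : constantCoeff u = 0) :
    coeff 3 (u ^ 2) = coeff 1 u * coeff 2 u + coeff 2 u * coeff 1 u := by
  simp [sq, coeff_mul, Finset.Nat.sum_antidiagonal_eq_sum_range_succ_mk, Finset.sum_range_succ,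
    hu]

theorem coeff_four_sq {u : R⟦X⟧} (hu : constantCoeff u = 0) :
    coeff 4 (u ^ 2) = coeff 1 u * coeff 3 u + coeff 2 u * coeff 2 u + coeff 3 u * coeff 1 u := by
  simp [sq, coeff_mul, Finset.Nat.sum_antidiagonal_eq_sum_range_succ_mk, Finset.sum_range_succ,
    hu]

theorem coeff_four_pow_three {u : R⟦X⟧} (hu : constantCoeff u = 0) :
    coeff 4 (u ^ 3) = coeff 1 u * coeff 1 u * coeff 2 u +
      (coeff 1 u * coeff 2 u + coeff 2 u * coeff 1 u) * coeff 1 u := by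
  simp [pow_succ, coeff_mul, Finset.Nat.sum_antidiagonal_eq_sum_range_succ_mk,
    Finset.sum_range_succ, hu]

theorem coeff_four_pow_four {u : R⟦X⟧} (hu : constantCoeff u = 0) :
    coeff 4 (u ^ 4) = coeff 1 u * coeff 1 u * coeff 1 u * coeff 1 u := by
  simp [pow_succ, coeff_mul, Finset.Nat.sum_antidiagonal_eq_sum_range_succ_mk,
    Finset.sum_range_succ, hu]

theorem coeff_four_Jcomp_assoc_sub (α β γ : R) :
    coeff 4 (Jcomp (Jcomp (X + C α * X ^ 2) (X + C β * X ^ 2)) (X + C γ * X ^ 2)) -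
      coeff 4 (Jcomp (X + C α * X ^ 2) (Jcomp (X + C β * X ^ 2) (X + C γ * X ^ 2))) =
      α * (β * γ - γ * β) := by
  have hq : ∀ a : R, constantCoeff (X + C a * X ^ 2) = 0 := by simp
  have hu : constantCoeff (X + C γ * X ^ 2 + C β * (X + C γ * X ^ 2) ^ 2) = 0 := by simp
  rw [Jcomp_X_add_C_mul_X_sq _ (hq _), Jcomp_X_add_C_mul_X_sq _ (hq _),
    Jcomp_X_add_C_mul_X_sq _ hu]
  simp [coeff_Jcomp, Finset.sum_range_succ, coeff_two_sq (hq _), coeff_three_sq (hq _),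
    coeff_four_sq (hq _), coeff_four_pow_three (hq _), coeff_four_pow_four (hq _),
    coeff_four_sq hu, coeff_pow_eq_zero_of_lt (hq _), coeff_X, coeff_X_pow]
  noncomm_ring

theorem mul_commutator_eq_zero_of_Jcomp_assoc
    (H : ∀ f ∈ Jset R, ∀ g ∈ Jset R, ∀ h ∈ Jset R,
      Jcomp (Jcomp f g) h = Jcomp f (Jcomp g h))
    (α β γ : R) : α * (β * γ - γ * β) = 0 := by
  have hmem : ∀ a : R, X + C a * X ^ 2 ∈ Jset R := fun a => by simp [Jset, coeff_X]
  rw [← coeff_four_Jcomp_assoc_sub, H _ (hmem α) _ (hmem β) _ (hmem γ), sub_self]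

end Ring

section CommRing
variable {R : Type*} [CommRing R]

theorem Jcomp_eq_subst {f g : R⟦X⟧} (hf : constantCoeff f = 0) (hg : constantCoeff g = 0) :
    Jcomp f g = f.subst g := by
  ext k
  have hsupp :
      (Function.support fun d => coeff d f • coeff k (g ^ d)) ⊆ Finset.range (k + 1) := by
    intro d hd
    by_contra hdk
    simp only [Finset.coe_range, Set.mem_Iio, not_lt] at hdk
    exact hd (by simp [coeff_pow_eq_zero_of_lt hg (show k < d by omega)])
  rw [coeff_Jcomp, coeff_subst' (HasSubst.of_constantCoeff_zero' hg),
    finsum_eq_sum_of_support_subset _ hsupp, Finset.sum_range_succ']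
  simp [hf]

theorem Jcomp_assoc {f g h : R⟦X⟧} (hf : constantCoeff f = 0) (hg : constantCoeff g = 0)
    (hh : constantCoeff h = 0) : Jcomp (Jcomp f g) h = Jcomp f (Jcomp g h) := by
  rw [Jcomp_eq_subst hf hg, Jcomp_eq_subst hg hh,
    Jcomp_eq_subst hf (constantCoeff_subst_eq_zero hh g hg),
    Jcomp_eq_subst (constantCoeff_subst_eq_zero hg f hf) hh,
    subst_comp_subst_apply (HasSubst.of_constantCoeff_zero' hg)
      (HasSubst.of_constantCoeff_zero' hh)]

end CommRing

end PowerSeries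

theorem statement1_general (R : Type*) [Ring R] :
    (∀ f ∈ Jset R, ∀ g ∈ Jset R, ∀ h ∈ Jset R,
        Jcomp (Jcomp f g) h = Jcomp f (Jcomp g h)) ↔
      (∀ α β γ : R, α * (β * γ - γ * β) = 0) := by
  refine ⟨mul_commutator_eq_zero_of_Jcomp_assoc, fun hC f hf g hg h hh => ?_⟩
  let : CommRing R :=
    { ‹Ring R› with mul_comm := fun a b => by simpa [sub_eq_zero] using hC 1 a b }
  have hJ : ∀ φ ∈ Jset R, constantCoeff φ = 0 := fun φ hφ =>
    (coeff_zero_eq_constantCoeff_apply φ).symm.trans hφ.1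
  exact Jcomp_assoc (hJ f hf) (hJ g hg) (hJ h hh)

/-- The substitution product on `𝒥(R)` is associative (equivalently, `(𝒥(R),∘)` is a
group) if and only if `R[R,R] = 0`. -/
theorem statement1 (K : Type*) [Field K] [CharZero K]
    (R : Type*) [Ring R] [Algebra K R] :
    (∀ f ∈ Jset R, ∀ g ∈ Jset R, ∀ h ∈ Jset R,
        Jcomp (Jcomp f g) h = Jcomp f (Jcomp g h)) ↔
      (∀ α β γ : R, α * (β * γ - γ * β) = 0) :=
  statement1_general R
end

section
/- Then 0 • b = b for all b ∈ V, the map (a,b) ↦ a*b := (D L_a)(0)(b) − b is ℝ-bilinear, and for every a ∈ V the Fréchet derivative at 0 of the map b ↦ a + b + a*b equals (D L_a)(0). -/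
section FderivLinearFamily

variable {𝕜 E F G : Type*} [NontriviallyNormedField 𝕜] [AddCommGroup E] [Module 𝕜 E]
  [NormedAddCommGroup F] [NormedSpace 𝕜 F] [NormedAddCommGroup G] [NormedSpace 𝕜 G]

theorem isLinearMap_fderiv_of_isLinearMap_left (g : E → F → G)
    (hg : ∀ y, IsLinearMap 𝕜 (g · y)) {y₀ : F} (hd : ∀ x, DifferentiableAt 𝕜 (g x) y₀) :
    IsLinearMap 𝕜 (fun x => fderiv 𝕜 (g x) y₀) where
  map_add x₁ x₂ := by
    have : g (x₁ + x₂) = fun y => g x₁ y + g x₂ y := funext fun y => (hg y).map_add x₁ x₂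
    rw [this, fderiv_fun_add (hd x₁) (hd x₂)]
  map_smul c x := by
    have : g (c • x) = fun y => c • g x y := funext fun y => (hg y).map_smul c x
    rw [this, fderiv_fun_const_smul (hd x)]

end FderivLinearFamily

theorem statement4_general (V : Type*) [NormedAddCommGroup V] [NormedSpace ℝ V]
    (mu : V → V → V)
    (hlin : ∀ b : V, IsLinearMap ℝ (fun a : V => mu a b - b))
    (hdiff : ∀ a : V, DifferentiableAt ℝ (mu a) 0) :
    (∀ b : V, mu 0 b = b) ∧
    (∀ a : V, IsLinearMap ℝ (fun b : V => fderiv ℝ (mu a) 0 b - b)) ∧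
    (∀ b : V, IsLinearMap ℝ (fun a : V => fderiv ℝ (mu a) 0 b - b)) ∧
    (∀ a : V, fderiv ℝ (fun b : V => a + b + (fderiv ℝ (mu a) 0 b - b)) 0
        = fderiv ℝ (mu a) 0) := by
  have fderiv_sub_id (a : V) :
      fderiv ℝ (fun b => mu a b - b) 0 = fderiv ℝ (mu a) 0 - ContinuousLinearMap.id ℝ V :=
    ((hdiff a).hasFDerivAt.sub (hasFDerivAt_id 0)).fderiv
  refine ⟨fun b => sub_eq_zero.mp (hlin b).map_zero, fun a => ?_, fun b => ?_, fun a => ?_⟩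
  · exact (fderiv ℝ (mu a) 0 - ContinuousLinearMap.id ℝ V).toLinearMap.isLinear
  · have hfam := isLinearMap_fderiv_of_isLinearMap_left (fun a b => mu a b - b) hlin
      fun a => (hdiff a).sub differentiableAt_id
    simp only [fderiv_sub_id] at hfam
    exact ((ContinuousLinearMap.apply ℝ V b).toLinearMap.comp (IsLinearMap.mk' _ hfam)).isLinear
  · set L := fderiv ℝ (mu a) 0
    have : (fun b => a + b + (L b - b)) = fun b => a + L b := funext fun b => by abel
    rw [this]
    exact (L.hasFDerivAt.const_add a).fderiv

/-- Let `V` be a finite-dimensional real normed vector space and `•` (here `mu`) a binary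
operation on `V` such that `a ↦ mu a b − b` is `ℝ`-linear for each `b`, and each left
translation `L_a = mu a` is Fréchet differentiable at `0`.  Then `mu 0 b = b` for all `b`,
the map `(a,b) ↦ a*b := (D L_a)(0)(b) − b` is `ℝ`-bilinear, and for every `a` the Fréchet
derivative at `0` of `b ↦ a + b + a*b` equals `(D L_a)(0)`. -/
theorem statement4 (V : Type*) [NormedAddCommGroup V] [NormedSpace ℝ V]
    [FiniteDimensional ℝ V] (mu : V → V → V)
    (hlin : ∀ b : V, IsLinearMap ℝ (fun a : V => mu a b - b))
    (hdiff : ∀ a : V, DifferentiableAt ℝ (mu a) 0) :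
    (∀ b : V, mu 0 b = b) ∧
    (∀ a : V, IsLinearMap ℝ (fun b : V => fderiv ℝ (mu a) 0 b - b)) ∧
    (∀ b : V, IsLinearMap ℝ (fun a : V => fderiv ℝ (mu a) 0 b - b)) ∧
    (∀ a : V, fderiv ℝ (fun b : V => a + b + (fderiv ℝ (mu a) 0 b - b)) 0
        = fderiv ℝ (mu a) 0) :=
  statement4_general V mu hlin hdiff
end

section
/- With the notation of the context, for every m ≥ 1, every sequence I = (i_1,…,i_m) of integers, all homogeneous a_1 ∈ A_{i_1}, …, a_m ∈ A_{i_m} and all b, c ∈ A, the following identity holds: |I|·N(I)·a_1⋯a_m·(cb − bc) = ∑_P N(I_P)·a_P·B(P^c), where the sum runs over all subsets P ⊆ {1,…,m} whose complement P^c is nonempty. (This is the recursion characterizing the Shestakov–Umirbaev brackets ⟨a_1,…,a_m; b,c⟩ of the algebra (A,*), so it expresses that these brackets are given by the closed formula B.) -/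
/-! Splitting off the first block of an ordered partition of `{1,…,m}` shows that the part
`B_{k+1}` of `B({1,…,m})` coming from partitions into `k + 2` blocks equals
`-∑_{P ≠ ∅} N(I_P) a_P B_k(Pᶜ)`, while the one-block part `B_0` is `|I| N(I) a_1⋯a_m (cb - bc)`.
Summing over `k` gives `B({1,…,m}) = |I| N(I) a_1⋯a_m (cb - bc) - ∑_{P ≠ ∅} N(I_P) a_P B(Pᶜ)`.
This is the identity, because on its right-hand side the term `P = ∅` is `B({1,…,m})` and the
term `P = {1,…,m}` vanishes, as `B(∅) = 0`. -/

open scoped Classical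

section

variable {K : Type*} [Field K] [CharZero K] {A : Type*} [Ring A] [Algebra K A]

/-- `a_P`: the ordered product `a_{p_1} ⋯ a_{p_r}` over the subset `P = {p_1 < … < p_r}`
(the empty product being `1`). -/
noncomputable def aProd {m : ℕ} (a : Fin m → A) (P : Finset (Fin m)) : A :=
  ((P.sort (· ≤ ·)).map a).prod

/-- `|I_P| = i_{p_1} + … + i_{p_r}`. -/
def sumI {m : ℕ} (i : Fin m → ℤ) (P : Finset (Fin m)) : ℤ := ∑ j ∈ P, i j

/-- `N(I_P) = (i_{p_1}+1)(i_{p_1}+i_{p_2}+1)⋯(i_{p_1}+⋯+i_{p_r}+1)`, with `N(I_∅) = 1`. -/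
def Nfun {m : ℕ} (i : Fin m → ℤ) (P : Finset (Fin m)) : ℤ :=
  ((List.range (P.sort (· ≤ ·)).length).map
    fun r => (((P.sort (· ≤ ·)).map i).take (r + 1)).sum + 1).prod

/-- `B(Q) = ∑_{k≥1} ∑_{(P_1,…,P_k)} (−1)^{k+1} |I_{P_k}| N(I_{P_1})⋯N(I_{P_k})
a_{P_1}⋯a_{P_k} (cb − bc)`, the inner sum over ordered partitions of `Q` into `k`
nonempty pairwise disjoint subsets. -/
noncomputable def Bfun {m : ℕ} (i : Fin m → ℤ) (a : Fin m → A) (b c : A)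
    (Q : Finset (Fin m)) : A :=
  ∑ kk ∈ Finset.range m, ∑ f : Fin (kk + 1) → Finset (Fin m),
    if (∀ j, (f j).Nonempty) ∧ (∀ j₁ j₂, j₁ ≠ j₂ → Disjoint (f j₁) (f j₂)) ∧
        Finset.univ.biUnion f = Q then
      ((-1 : ℤ) ^ (kk + 2) * sumI i (f (Fin.last kk)) * ∏ j, Nfun i (f j)) •
        ((List.ofFn fun j : Fin (kk + 1) => aProd a (f j)).prod * (c * b - b * c))
    else 0

open Function

def IsOrderedPartition {α : Type*} [DecidableEq α] {k : ℕ} (f : Fin k → Finset α)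
    (Q : Finset α) : Prop :=
  (∀ j, (f j).Nonempty) ∧ Pairwise (Disjoint on f) ∧ Finset.univ.biUnion f = Q

namespace IsOrderedPartition

variable {α : Type*} [DecidableEq α] {k : ℕ}

theorem card_le {f : Fin k → Finset α} {Q : Finset α} (h : IsOrderedPartition f Q) :
    k ≤ Q.card := by
  obtain ⟨hne, hdisj, rfl⟩ := h
  rw [Finset.card_biUnion fun j₁ _ j₂ _ hj => hdisj hj]
  simpa only [Finset.card_univ, Fintype.card_fin, smul_eq_mul, mul_one] using
    Finset.card_nsmul_le_sum Finset.univ _ 1 fun j _ => Finset.one_le_card.mpr (hne j)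

theorem fin_one_iff (f : Fin 1 → Finset α) (Q : Finset α) :
    IsOrderedPartition f Q ↔ (f 0).Nonempty ∧ f 0 = Q := by
  simp [IsOrderedPartition, Fin.forall_fin_one, Subsingleton.pairwise]

theorem cons_univ_iff [Fintype α] (P : Finset α) (g : Fin k → Finset α) :
    IsOrderedPartition (Fin.cons P g : Fin (k + 1) → Finset α) Finset.univ ↔
      P.Nonempty ∧ IsOrderedPartition g Pᶜ := by
  have hunion : Finset.univ.biUnion (Fin.cons P g : Fin (k + 1) → Finset α) =
      P ∪ Finset.univ.biUnion g := by
    ext x; simp [Fin.exists_fin_succ]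
  have hcompl : Finset.univ.biUnion g = Pᶜ ↔
      Disjoint P (Finset.univ.biUnion g) ∧ P ∪ Finset.univ.biUnion g = Finset.univ := by
    rw [eq_compl_iff_isCompl, isCompl_comm, isCompl_iff, codisjoint_iff]
    exact Iff.rfl
  have hpairwise : Pairwise (Disjoint on (Fin.cons P g : Fin (k + 1) → Finset α)) ↔
      (∀ j, Disjoint P (g j)) ∧ Pairwise (Disjoint on g) := by
    simp only [pairwise_fin_succ_iff, onFun, Fin.cons_zero, Fin.cons_succ,
      disjoint_comm (b := P), and_self_left]
  simp only [IsOrderedPartition, hunion, hcompl, hpairwise, Fin.forall_fin_succ, Fin.cons_zero,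
    Fin.cons_succ, Finset.disjoint_biUnion_right, Finset.mem_univ, forall_const]
  tauto

end IsOrderedPartition

section Blocks

variable {m : ℕ} (i : Fin m → ℤ) (a : Fin m → A) (b c : A)

noncomputable def partitionWeight {k : ℕ} (f : Fin (k + 1) → Finset (Fin m)) : A :=
  ((-1 : ℤ) ^ (k + 2) * sumI i (f (Fin.last k)) * ∏ j, Nfun i (f j)) •
    ((List.ofFn fun j : Fin (k + 1) => aProd a (f j)).prod * (c * b - b * c))

noncomputable def Bblocks (k : ℕ) (Q : Finset (Fin m)) : A :=
  ∑ f : Fin (k + 1) → Finset (Fin m),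
    if IsOrderedPartition f Q then partitionWeight i a b c f else 0

theorem Bfun_eq_sum_Bblocks (Q : Finset (Fin m)) :
    Bfun i a b c Q = ∑ k ∈ Finset.range m, Bblocks i a b c k Q := by
  unfold Bfun Bblocks
  exact Finset.sum_congr rfl fun k _ => Finset.sum_congr rfl fun f _ => if_congr Iff.rfl rfl rfl

theorem partitionWeight_cons {k : ℕ} (P : Finset (Fin m)) (g : Fin (k + 1) → Finset (Fin m)) :
    partitionWeight i a b c (Fin.cons P g : Fin (k + 2) → Finset (Fin m)) =
      -(Nfun i P • (aProd a P * partitionWeight i a b c g)) := by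
  simp only [partitionWeight, ← Fin.succ_last, Fin.cons_succ, Fin.prod_univ_succ, Fin.cons_zero,
    List.ofFn_succ, List.prod_cons]
  rw [mul_smul_comm, smul_smul, ← neg_smul, mul_assoc (aProd a P)]
  congr 1
  ring

theorem Bblocks_zero (Q : Finset (Fin m)) :
    Bblocks i a b c 0 Q = (sumI i Q * Nfun i Q) • (aProd a Q * (c * b - b * c)) := by
  rw [Bblocks, ← (Equiv.funUnique (Fin 1) (Finset (Fin m))).symm.sum_comp,
    Fintype.sum_eq_single Q fun S hS =>
      if_neg fun h => hS ((IsOrderedPartition.fin_one_iff _ _).1 h).2]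
  obtain rfl | hQ := Q.eq_empty_or_nonempty
  · simp [IsOrderedPartition.fin_one_iff, sumI]
  · simp [IsOrderedPartition.fin_one_iff, hQ, partitionWeight, mul_comm]

theorem Bblocks_succ_univ (k : ℕ) :
    Bblocks i a b c (k + 1) Finset.univ =
      -∑ P ∈ Finset.univ.filter Finset.Nonempty,
        Nfun i P • (aProd a P * Bblocks i a b c k Pᶜ) := by
  rw [Bblocks, ← (Fin.consEquiv fun _ => Finset (Fin m)).sum_comp, Fintype.sum_prod_type,
    Finset.sum_filter, ← Finset.sum_neg_distrib]
  simp only [Fin.consEquiv, Equiv.coe_fn_mk]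
  refine Finset.sum_congr rfl fun P _ => ?_
  by_cases hP : P.Nonempty
  · rw [if_pos hP, Bblocks, Finset.mul_sum, Finset.smul_sum, ← Finset.sum_neg_distrib]
    refine Finset.sum_congr rfl fun g _ => ?_
    simp only [IsOrderedPartition.cons_univ_iff, hP, true_and]
    split_ifs <;> simp [partitionWeight_cons]
  · simp [hP, IsOrderedPartition.cons_univ_iff]

theorem Bblocks_eq_zero_of_card_lt {k : ℕ} {Q : Finset (Fin m)} (h : Q.card < k + 1) :
    Bblocks i a b c k Q = 0 :=
  Finset.sum_eq_zero fun _ _ => if_neg fun hf => h.not_ge hf.card_le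

theorem Bfun_eq_sum_range {N : ℕ} {Q : Finset (Fin m)} (hN : Q.card ≤ N) :
    Bfun i a b c Q = ∑ k ∈ Finset.range N, Bblocks i a b c k Q := by
  have hrange : ∀ N, Q.card ≤ N → ∑ k ∈ Finset.range N, Bblocks i a b c k Q =
      ∑ k ∈ Finset.range Q.card, Bblocks i a b c k Q := fun N hN =>
    (Finset.sum_subset (Finset.range_subset_range.2 hN) fun k _ hk =>
      Bblocks_eq_zero_of_card_lt i a b c (by simpa using hk)).symm
  rw [Bfun_eq_sum_Bblocks, hrange m (by simpa using Q.card_le_univ), hrange N hN]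

theorem Bfun_empty : Bfun i a b c (∅ : Finset (Fin m)) = 0 := by
  rw [Bfun_eq_sum_range i a b c (N := 0) (by simp), Finset.sum_range_zero]

theorem Bfun_univ :
    Bfun i a b c Finset.univ =
      (sumI i Finset.univ * Nfun i Finset.univ) • (aProd a Finset.univ * (c * b - b * c)) -
        ∑ P ∈ Finset.univ.filter Finset.Nonempty, Nfun i P • (aProd a P * Bfun i a b c Pᶜ) := by
  have hcard : ∀ Q : Finset (Fin m), Q.card ≤ m := fun Q => by simpa using Q.card_le_univ
  rw [Bfun_eq_sum_range i a b c (hcard _).step, Finset.sum_range_succ', Bblocks_zero]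
  simp only [Bblocks_succ_univ, Finset.sum_neg_distrib]
  rw [Finset.sum_comm, add_comm, ← sub_eq_add_neg]
  congr 1
  refine Finset.sum_congr rfl fun P _ => ?_
  rw [Bfun_eq_sum_range i a b c (hcard _), Finset.mul_sum, Finset.smul_sum]

theorem sum_Nfun_smul_aProd_mul_Bfun_compl :
    ∑ P, Nfun i P • (aProd a P * Bfun i a b c Pᶜ) =
      (sumI i Finset.univ * Nfun i Finset.univ) • (aProd a Finset.univ * (c * b - b * c)) := by
  have hempty : Finset.univ.filter (fun P : Finset (Fin m) => ¬P.Nonempty) = {∅} := by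
    ext P; simp [Finset.not_nonempty_iff_eq_empty]
  rw [← Finset.sum_filter_add_sum_filter_not Finset.univ Finset.Nonempty, hempty,
    Finset.sum_singleton, Finset.compl_empty, Bfun_univ]
  simp [Nfun, aProd]

end Blocks

theorem statement5_general (A : Type*) [Ring A]
    (m : ℕ) (i : Fin m → ℤ) (a : Fin m → A)
    (b c : A) :
    (sumI i Finset.univ * Nfun i Finset.univ) •
        (aProd a Finset.univ * (c * b - b * c)) =
      ∑ P ∈ Finset.univ.filter (fun P : Finset (Fin m) => P ≠ Finset.univ),
        Nfun i P • (aProd a P * Bfun i a b c Pᶜ) := by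
  rw [Finset.sum_filter_of_ne, sum_Nfun_smul_aProd_mul_Bfun_compl]
  rintro P - hP rfl
  simp [Bfun_empty] at hP

/-- The recursion characterizing the Shestakov–Umirbaev brackets of `(A,*)`:
`|I|·N(I)·a_1⋯a_m·(cb − bc) = ∑_P N(I_P)·a_P·B(Pᶜ)`, the sum over all subsets
`P ⊆ {1,…,m}` with nonempty complement. -/
theorem statement5 (K : Type*) [Field K] [CharZero K] (A : Type*) [Ring A] [Algebra K A]
    (𝒜 : ℤ → Submodule K A) [GradedRing 𝒜]
    (m : ℕ) (hm : 1 ≤ m) (i : Fin m → ℤ) (a : Fin m → A)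
    (ha : ∀ j, a j ∈ 𝒜 (i j)) (b c : A) :
    (sumI i Finset.univ * Nfun i Finset.univ) •
        (aProd a Finset.univ * (c * b - b * c)) =
      ∑ P ∈ Finset.univ.filter (fun P : Finset (Fin m) => P ≠ Finset.univ),
        Nfun i P • (aProd a P * Bfun i a b c Pᶜ) :=
  statement5_general A m i a b c

end
end

section
/- Let α ∈ R and n ≥ 1, and let A, B ∈ 𝒥(R) satisfy A ≡ t + α t^{n+1} (mod 𝒥_{n+1}(R)) and B ≡ t + α t^{n+2} (mod 𝒥_{n+2}(R)). Then for every β ∈ R and every m ≥ n+2 there exist a, c ∈ 𝒥_{m−n}(R) and b, d ∈ 𝒥_{m−n−1}(R) such that [a,A] ∘ [b,B] ≡ t + αβ t^{m+1} (mod 𝒥_{m+1}(R)) and [c,A] ∘ [d,B] ≡ t + βα t^{m+1} (mod 𝒥_{m+1}(R)). -/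
open PowerSeries

/-- `𝒥_n(R)`. -/
def JsetN (R : Type*) [Ring R] (n : ℕ) : Set (PowerSeries R) :=
  {f | f ∈ Jset R ∧ ∀ i, 1 ≤ i → i < n → coeff (i + 1) f = 0}

/-- `f ≡ g (mod 𝒥_n(R))`. -/
def JModEq {R : Type*} [Ring R] (n : ℕ) (f g : PowerSeries R) : Prop :=
  ∀ i, 1 ≤ i → i < n → coeff (i + 1) f = coeff (i + 1) g

/-!
Write `f ≡ g [X^k]` for `X ^ k ∣ f - g`. The whole argument rests on a first-order Taylor
expansion of the substitution product: if `f ≡ X [X^(s+1)]` and `g ≡ X [X^(r+1)]`, then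
`f ∘ g ≡ f + g - X + (s+1) f_{s+1} g_{r+1} X^(s+r+1) [X^(s+r+2)]`.
Consequently, for `A ≡ X + α X^(n+1)` and `a ≡ X + γ X^(k+1)`, the two products `A ∘ a` and
`a ∘ A` differ first in degree `n+k+1`, and solving `(A ∘ a) ∘ u = a ∘ A` degree by degree gives
`[a, A] ≡ X + ((k+1) γα - (n+1) αγ) X^(n+k+1) [X^(n+k+2)]`; below that degree, composition
just adds deviations from `X`. With `a = X + γ X^(m-n+1)`, `b = X + δ X^(m-n)` and
`γ, δ ∈ K β`, the top coefficient of `[a, A] ∘ [b, B]` is a `K`-linear combination of `βα`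
and `αβ` whose coefficient matrix has determinant `-(m+2) ≠ 0` in characteristic zero, so both
`αβ` and `βα` are attained.
-/

open Finset

namespace PowerSeries

variable {R : Type*} [Ring R]

theorem coeff_eq_of_X_pow_dvd_sub {f g : R⟦X⟧} {k j : ℕ} (h : X ^ k ∣ f - g) (hj : j < k) :
    coeff j f = coeff j g :=
  sub_eq_zero.mp (map_sub (coeff j) f g ▸ X_pow_dvd_iff.mp h j hj)

theorem coeff_X_pow_mul_eq_zero_of_lt {q : R⟦X⟧} {r : ℕ} (hq : X ^ (r + 1) ∣ q) {i M : ℕ}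
    (hM : M < i + (r + 1)) : coeff M (X ^ i * q) = 0 :=
  X_pow_dvd_iff.mp (pow_add (X : R⟦X⟧) i (r + 1) ▸ mul_dvd_mul_left _ hq) M hM

theorem X_pow_dvd_monomial {k j : ℕ} (h : k ≤ j) (c : R) : (X : R⟦X⟧) ^ k ∣ monomial j c :=
  X_pow_dvd_iff.mpr fun i hi => by rw [coeff_monomial, if_neg (by omega)]

theorem X_pow_dvd_sub_and_coeff_eq_of_dvd_sub_add_monomial {f g : R⟦X⟧} {k : ℕ} {c : R}
    (h : X ^ (k + 1) ∣ f - (g + monomial k c)) : X ^ k ∣ f - g ∧ coeff k f = coeff k g + c := by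
  refine ⟨?_, by simpa using coeff_eq_of_X_pow_dvd_sub h (lt_add_one k)⟩
  convert dvd_add ((pow_dvd_pow X k.le_succ).trans h) (X_pow_dvd_monomial le_rfl c) using 1
  abel

theorem X_pow_dvd_X_add_pow_sub {h : R⟦X⟧} {s : ℕ} (hh : X ^ (s + 1) ∣ h) (i : ℕ) :
    X ^ (i + 2 * s + 1) ∣ (X + h) ^ (i + 1) - (X ^ (i + 1) + (i + 1) • (X ^ i * h)) := by
  rw [add_comm X h, (commute_X h).add_pow, sum_range_succ', sum_range_succ']
  have hlinear : h ^ (0 + 1) * X ^ (i + 1 - (0 + 1)) * ((i + 1).choose (0 + 1) : R⟦X⟧) =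
      (i + 1) • (X ^ i * h) := by
    rw [Nat.choose_one_right, zero_add, pow_one, Nat.add_sub_cancel, ← X_pow_mul, nsmul_eq_mul',
      Nat.cast_succ]
  rw [hlinear, pow_zero, one_mul, Nat.sub_zero, Nat.choose_zero_right, Nat.cast_one, mul_one,
    show ∀ a b c : R⟦X⟧, a + b + c - (c + b) = a from fun _ _ _ => by abel]
  refine dvd_sum fun m hm => Dvd.dvd.mul_right ?_ _
  have hpow : X ^ ((s + 1) * (m + 2)) ∣ h ^ (m + 2) := by
    obtain ⟨c, rfl⟩ := hh
    rw [(commute_X_pow c _).symm.mul_pow, pow_mul]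
    exact dvd_mul_right _ _
  have hm : i + 2 * s + 1 ≤ (i + 1 - (m + 2)) + (s + 1) * (m + 2) := by
    rw [mem_range] at hm; nlinarith [Nat.sub_add_cancel (show m + 2 ≤ i + 1 by omega)]
  rw [← X_pow_mul]
  exact (pow_dvd_pow X hm).trans (pow_add (X : R⟦X⟧) _ _ ▸ mul_dvd_mul_left _ hpow)

theorem coeff_Jcomp_X_add {f q : R⟦X⟧} {s r M : ℕ} (hs : 1 ≤ s) (hr : 1 ≤ r)
    (hf : X ^ (s + 1) ∣ f - X) (hq : X ^ (r + 1) ∣ q) (hM : M ≤ s + r + 1) :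
    coeff M (Jcomp f (X + q)) =
      coeff M f + ∑ i ∈ range M, (i + 1) • (coeff (i + 1) f * coeff M (X ^ i * q)) := by
  have hfi : ∀ i, 1 ≤ i → i < s → coeff (i + 1) f = 0 := fun i hi his => by
    simpa [coeff_X, show i ≠ 0 by omega] using X_pow_dvd_iff.mp hf (i + 1) (by omega)
  have hterm : ∀ i ∈ range M, coeff (i + 1) f * coeff M ((X + q) ^ (i + 1)) =
      coeff (i + 1) f * coeff M (X ^ (i + 1)) +
        (i + 1) • (coeff (i + 1) f * coeff M (X ^ i * q)) := fun i hi => by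
    rw [← mul_smul_comm, ← mul_add, ← map_nsmul, ← map_add, ← sub_eq_zero, ← mul_sub, ← map_sub]
    rcases Nat.lt_or_ge i s with his | his
    · rcases Nat.eq_zero_or_pos i with rfl | hi0
      · simp
      · rw [hfi i hi0 his, zero_mul]
    · rw [X_pow_dvd_iff.mp (X_pow_dvd_X_add_pow_sub hq i) M (by rw [mem_range] at hi; omega),
        mul_zero]
  rw [Jcomp, coeff_mk, sum_congr rfl hterm, sum_add_distrib]
  congr 1
  rcases M with _ | N
  · simpa [coeff_X] using (X_pow_dvd_iff.mp hf 0 (by omega)).symm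
  · simp [coeff_X_pow]

theorem X_pow_dvd_Jcomp_sub {f g : R⟦X⟧} {s r : ℕ} (hs : 1 ≤ s) (hr : 1 ≤ r)
    (hf : X ^ (s + 1) ∣ f - X) (hg : X ^ (r + 1) ∣ g - X) :
    X ^ (s + r + 2) ∣
      Jcomp f g -
        (f + g - X + monomial (s + r + 1) ((s + 1) • (coeff (s + 1) f * coeff (r + 1) g))) := by
  obtain ⟨q, rfl⟩ : ∃ q, g = X + q := ⟨g - X, by abel⟩
  rw [add_sub_cancel_left] at hg
  have hq_coeff : coeff (r + 1) (X + q) = coeff (r + 1) q := by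
    simp [coeff_X, Nat.pos_iff_ne_zero.mp hr]
  rw [X_pow_dvd_iff]
  intro M hM
  have hlinear : ∑ i ∈ range M, (i + 1) • (coeff (i + 1) f * coeff M (X ^ i * q)) =
      coeff M q +
        coeff M (monomial (s + r + 1) ((s + 1) • (coeff (s + 1) f * coeff (r + 1) q))) := by
    -- only the terms `i = 0` and `i = s` survive
    rw [sum_eq_add 0 s (by omega)]
    · have hf1 : coeff 1 f = 1 := by simpa using coeff_eq_of_X_pow_dvd_sub hf (j := 1) (by omega)
      rw [zero_add, one_smul, hf1, one_mul, pow_zero, one_mul, coeff_monomial]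
      congr 1
      split_ifs with hMtop
      · rw [hMtop, coeff_X_pow_mul', if_pos (by omega), show s + r + 1 - s = r + 1 by omega]
      · rw [coeff_X_pow_mul_eq_zero_of_lt hg (by omega), mul_zero, smul_zero]
    · rintro c - ⟨hc0, hcs⟩
      rcases Nat.lt_or_gt_of_ne hcs with hlt | hgt
      · rw [coeff_eq_of_X_pow_dvd_sub hf (j := c + 1) (by omega), coeff_X, if_neg (by omega),
          zero_mul, smul_zero]
      · rw [coeff_X_pow_mul_eq_zero_of_lt hg (by omega), mul_zero, smul_zero]
    · intro h0
      rw [mem_range, not_lt, Nat.le_zero] at h0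
      simp [h0, X_pow_dvd_iff.mp hg 0 (by omega)]
    · intro hsM
      rw [mem_range, not_lt] at hsM
      rw [coeff_X_pow_mul_eq_zero_of_lt hg (by omega), mul_zero, smul_zero]
  rw [show f + (X + q) - X = f + q by abel, map_sub, map_add, map_add, hq_coeff,
    coeff_Jcomp_X_add hs hr hf hg (by omega), hlinear]
  abel

theorem X_sq_dvd_Jcomp_sub_X {f g : R⟦X⟧} (hf : X ^ 2 ∣ f - X) (hg : X ^ 2 ∣ g - X) :
    X ^ 2 ∣ Jcomp f g - X := by
  rw [X_pow_dvd_iff] at hf hg ⊢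
  intro M hM
  have hf1 := hf 1 (by omega)
  have hg1 := hg 1 (by omega)
  interval_cases M <;> simp_all [Jcomp, sub_eq_zero]

theorem X_pow_dvd_sub_X_sub_Jcomp_sub {w u : R⟦X⟧} {M : ℕ} (hM : 1 ≤ M) (hw : X ^ 2 ∣ w - X)
    (hu : X ^ 2 ∣ u - X) (hwu : X ^ (M + 1) ∣ Jcomp w u - w) :
    X ^ (M + 2) ∣ u - X - (Jcomp w u - w) := by
  have hwu_le : ∀ r ≤ M, X ^ (r + 1) ∣ Jcomp w u - w := fun r hr =>
    (pow_dvd_pow X (by omega)).trans hwu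
  suffices ∀ r, 1 ≤ r → r ≤ M + 1 → X ^ (r + 1) ∣ u - X - (Jcomp w u - w) from
    this (M + 1) (by omega) le_rfl
  intro r hr
  induction r, hr using Nat.le_induction with
  | base => exact fun _ => dvd_sub hu (hwu_le 1 hM)
  | succ r hr ih =>
    intro hrM
    have hur : X ^ (r + 1) ∣ u - X := by
      convert dvd_add (ih (by omega)) (hwu_le r (by omega)) using 1
      abel
    -- the expansion with `s = 1`: modulo `X ^ (r + 2)`, `w ∘ u ≡ w + (u - X)`
    have hcore := X_pow_dvd_Jcomp_sub le_rfl hr hw hur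
    have htop := X_pow_dvd_monomial (R := R) (show r + 2 ≤ 1 + r + 1 by omega)
      ((1 + 1) • (coeff (1 + 1) w * coeff (r + 1) u))
    convert dvd_neg.mpr (dvd_add ((pow_dvd_pow X (by omega)).trans hcore) htop) using 1
    abel

theorem X_pow_dvd_commutator_sub {A a u : R⟦X⟧} {n k : ℕ} {α γ : R} (hn : 1 ≤ n) (hk : 1 ≤ k)
    (hA : X ^ (n + 2) ∣ A - (X + monomial (n + 1) α))
    (ha : X ^ (k + 2) ∣ a - (X + monomial (k + 1) γ))
    (hu : X ^ 2 ∣ u - X) (hcomm : Jcomp (Jcomp A a) u = Jcomp a A) :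
    X ^ (n + k + 2) ∣ u - (X + monomial (n + k + 1) ((k + 1) • (γ * α) - (n + 1) • (α * γ))) := by
  obtain ⟨hA', hAα⟩ := X_pow_dvd_sub_and_coeff_eq_of_dvd_sub_add_monomial hA
  obtain ⟨ha', haγ⟩ := X_pow_dvd_sub_and_coeff_eq_of_dvd_sub_add_monomial ha
  rw [coeff_X, if_neg (by omega), zero_add] at hAα haγ
  have hAa := X_pow_dvd_Jcomp_sub hn hk hA' ha'
  have haA := X_pow_dvd_Jcomp_sub hk hn ha' hA'
  rw [hAα, haγ] at hAa haA
  rw [add_comm k n] at haA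
  have hdiff : X ^ (n + k + 2) ∣ Jcomp a A - Jcomp A a -
      monomial (n + k + 1) ((k + 1) • (γ * α) - (n + 1) • (α * γ)) := by
    convert dvd_sub haA hAa using 1
    rw [map_sub]
    abel
  have hw : X ^ 2 ∣ Jcomp A a - X := X_sq_dvd_Jcomp_sub_X
    ((pow_dvd_pow X (by omega)).trans hA') ((pow_dvd_pow X (by omega)).trans ha')
  have hwu : X ^ (n + k + 1) ∣ Jcomp (Jcomp A a) u - Jcomp A a := by
    rw [hcomm]
    convert dvd_add ((pow_dvd_pow X (by omega)).trans hdiff)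
      (X_pow_dvd_monomial (j := n + k + 1) le_rfl ((k + 1) • (γ * α) - (n + 1) • (α * γ))) using 1
    abel
  have hu' := X_pow_dvd_sub_X_sub_Jcomp_sub (by omega) hw hu hwu
  rw [hcomm] at hu'
  convert dvd_add hu' hdiff using 1
  abel

theorem X_pow_dvd_Jcomp_sub_X_add_monomial {u v : R⟦X⟧} {m : ℕ} {c d : R} (hm : 1 ≤ m)
    (hu : X ^ (m + 2) ∣ u - (X + monomial (m + 1) c))
    (hv : X ^ (m + 2) ∣ v - (X + monomial (m + 1) d)) :
    X ^ (m + 2) ∣ Jcomp u v - (X + monomial (m + 1) (c + d)) := by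
  have hcore := X_pow_dvd_Jcomp_sub hm hm
    (X_pow_dvd_sub_and_coeff_eq_of_dvd_sub_add_monomial hu).1
    (X_pow_dvd_sub_and_coeff_eq_of_dvd_sub_add_monomial hv).1
  have htop := X_pow_dvd_monomial (R := R) (show m + 2 ≤ m + m + 1 by omega)
    ((m + 1) • (coeff (m + 1) u * coeff (m + 1) v))
  convert dvd_add (dvd_add (dvd_add ((pow_dvd_pow X (by omega)).trans hcore) htop) hu) hv using 1
  rw [map_add]
  abel

end PowerSeries

section Jset

open PowerSeries

variable {R : Type*} [Ring R]

theorem X_sq_dvd_sub_X_of_mem_Jset {f : R⟦X⟧} (hf : f ∈ Jset R) : X ^ 2 ∣ f - X :=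
  X_pow_dvd_iff.mpr fun M hM => by
    interval_cases M
    · rw [map_sub, hf.1, coeff_zero_X, sub_zero]
    · rw [map_sub, hf.2, coeff_one_X, sub_self]

theorem X_pow_dvd_sub_X_add_monomial_of_JModEq {f : R⟦X⟧} {k : ℕ} {c : R} (hf : f ∈ Jset R)
    (hk : 2 ≤ k) (h : JModEq k f (X + monomial k c)) : X ^ (k + 1) ∣ f - (X + monomial k c) :=
  X_pow_dvd_iff.mpr fun M hM => by
    rw [map_sub, sub_eq_zero]
    match M with
    | 0 => rw [hf.1, map_add, coeff_zero_X, coeff_monomial, if_neg (by omega), add_zero]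
    | 1 => rw [hf.2, map_add, coeff_one_X, coeff_monomial, if_neg (by omega), add_zero]
    | i + 2 => exact h (i + 1) (by omega) (by omega)

theorem JModEq_of_X_pow_dvd_sub {f g : R⟦X⟧} {n : ℕ} (h : X ^ (n + 1) ∣ f - g) : JModEq n f g :=
  fun _ _ hi => coeff_eq_of_X_pow_dvd_sub h (by omega)

theorem X_add_monomial_mem_JsetN {k : ℕ} (hk : 1 ≤ k) (c : R) :
    X + monomial (k + 1) c ∈ JsetN R k :=
  ⟨⟨by rw [map_add, coeff_zero_X, coeff_monomial, if_neg (by omega), add_zero],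
      by rw [map_add, coeff_one_X, coeff_monomial, if_neg (by omega), add_zero]⟩,
    fun i _ hik => by
      rw [map_add, coeff_X, coeff_monomial, if_neg (by omega), if_neg (by omega), add_zero]⟩

theorem exists_commutators_Jcomp_modEq {A B : R⟦X⟧} {α : R} {n k : ℕ} (hn : 1 ≤ n) (hk : 1 ≤ k)
    (hA : X ^ (n + 2) ∣ A - (X + monomial (n + 1) α))
    (hB : X ^ (n + 3) ∣ B - (X + monomial (n + 2) α)) (γ δ : R) :
    ∃ a ∈ JsetN R (k + 1), ∃ b ∈ JsetN R k,
      ∀ u ∈ Jset R, ∀ v ∈ Jset R,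
        Jcomp (Jcomp A a) u = Jcomp a A → Jcomp (Jcomp B b) v = Jcomp b B →
        JModEq (n + k + 2) (Jcomp u v) (X + monomial (n + k + 2)
          ((k + 2) • (γ * α) - (n + 1) • (α * γ) + ((k + 1) • (δ * α) - (n + 2) • (α * δ)))) := by
  refine ⟨X + monomial (k + 2) γ, X_add_monomial_mem_JsetN (by omega) γ,
    X + monomial (k + 1) δ, X_add_monomial_mem_JsetN hk δ, fun u hu v hv hcu hcv => ?_⟩
  have hu' := X_pow_dvd_commutator_sub (k := k + 1) (γ := γ) hn (by omega) hA (by simp)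
    (X_sq_dvd_sub_X_of_mem_Jset hu) hcu
  have hv' := X_pow_dvd_commutator_sub (n := n + 1) (γ := δ) (by omega) hk hB (by simp)
    (X_sq_dvd_sub_X_of_mem_Jset hv) hcv
  rw [show n + 1 + k = n + k + 1 by omega] at hv'
  exact JModEq_of_X_pow_dvd_sub (X_pow_dvd_Jcomp_sub_X_add_monomial (by omega) hu' hv')

end Jset

/-- Klopsch's lemma: given `A ≡ t + α t^{n+1} (mod 𝒥_{n+1})` and
`B ≡ t + α t^{n+2} (mod 𝒥_{n+2})` and `m ≥ n+2`, there are `a, c ∈ 𝒥_{m−n}` and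
`b, d ∈ 𝒥_{m−n−1}` with `[a,A] ∘ [b,B] ≡ t + αβ t^{m+1}` and
`[c,A] ∘ [d,B] ≡ t + βα t^{m+1}` mod `𝒥_{m+1}`.  (The commutator `[a,A]` is
formalized as: any `u ∈ 𝒥(R)` with `(A ∘ a) ∘ u = a ∘ A`.) -/
theorem statement10 (K : Type*) [Field K] [CharZero K]
    (R : Type*) [Ring R] [Algebra K R]
    (α : R) (n : ℕ) (hn : 1 ≤ n) (A B : PowerSeries R)
    (hA : A ∈ Jset R) (hB : B ∈ Jset R)
    (hAc : JModEq (n + 1) A (X + monomial (n + 1) α))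
    (hBc : JModEq (n + 2) B (X + monomial (n + 2) α))
    (β : R) (m : ℕ) (hm : n + 2 ≤ m) :
    (∃ a ∈ JsetN R (m - n), ∃ b ∈ JsetN R (m - n - 1),
      ∀ u ∈ Jset R, ∀ v ∈ Jset R,
        Jcomp (Jcomp A a) u = Jcomp a A → Jcomp (Jcomp B b) v = Jcomp b B →
        JModEq (m + 1) (Jcomp u v) (X + monomial (m + 1) (α * β))) ∧
    (∃ c ∈ JsetN R (m - n), ∃ d ∈ JsetN R (m - n - 1),
      ∀ u ∈ Jset R, ∀ v ∈ Jset R,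
        Jcomp (Jcomp A c) u = Jcomp c A → Jcomp (Jcomp B d) v = Jcomp d B →
        JModEq (m + 1) (Jcomp u v) (X + monomial (m + 1) (β * α))) := by
  obtain ⟨k, hk, rfl⟩ : ∃ k, 1 ≤ k ∧ m = n + k + 1 := ⟨m - n - 1, by omega, by omega⟩
  rw [show n + k + 1 - n = k + 1 by omega, Nat.add_sub_cancel]
  have hA' := X_pow_dvd_sub_X_add_monomial_of_JModEq hA (by omega) hAc
  have hB' := X_pow_dvd_sub_X_add_monomial_of_JModEq hB (by omega) hBc
  have hD : ((n + k + 3 : ℕ) : K) ≠ 0 := Nat.cast_ne_zero.mpr (by omega)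
  have htop : ∀ e f : K, (k + 2) • ((e • β) * α) - (n + 1) • (α * (e • β)) +
      ((k + 1) • ((f • β) * α) - (n + 2) • (α * (f • β))) =
      (((k + 2 : ℕ) : K) * e + ((k + 1 : ℕ) : K) * f) • (β * α) -
        (((n + 1 : ℕ) : K) * e + ((n + 2 : ℕ) : K) * f) • (α * β) := by
    intro e f
    simp only [smul_mul_assoc, mul_smul_comm, ← Nat.cast_smul_eq_nsmul K, smul_smul, add_smul]
    abel
  constructor
  · have h := exists_commutators_Jcomp_modEq (k := k) hn hk hA' hB'
      ((((k + 1 : ℕ) : K) / ((n + k + 3 : ℕ) : K)) • β)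
      ((-((k + 2 : ℕ) : K) / ((n + k + 3 : ℕ) : K)) • β)
    rwa [htop, show (((k + 2 : ℕ) : K) * _ + ((k + 1 : ℕ) : K) * _) = 0 by field_simp; ring,
      show (((n + 1 : ℕ) : K) * _ + ((n + 2 : ℕ) : K) * _) = -1 by field_simp; push_cast; ring,
      zero_smul, neg_one_smul, zero_sub, neg_neg] at h
  · have h := exists_commutators_Jcomp_modEq (k := k) hn hk hA' hB'
      ((((n + 2 : ℕ) : K) / ((n + k + 3 : ℕ) : K)) • β)
      ((-((n + 1 : ℕ) : K) / ((n + k + 3 : ℕ) : K)) • β)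
    rwa [htop,
      show (((k + 2 : ℕ) : K) * _ + ((k + 1 : ℕ) : K) * _) = 1 by field_simp; push_cast; ring,
      show (((n + 1 : ℕ) : K) * _ + ((n + 2 : ℕ) : K) * _) = 0 by field_simp; ring,
      zero_smul, one_smul, sub_zero] at h
end

section
/- If S[S,S] = 0, then ⟨a,b⟩ := b′a − a′b is a Lie bracket on S[t]: it is bilinear, ⟨a,b⟩ = −⟨b,a⟩, and the Jacobi identity ⟨⟨a,b⟩,c⟩ + ⟨⟨b,c⟩,a⟩ + ⟨⟨c,a⟩,b⟩ = 0 holds for all a, b, c ∈ S[t]. -/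
noncomputable section

variable (K : Type*) [Field K] [CharZero K]
variable (S : Type*) [NonUnitalRing S] [Module K S] [SMulCommClass K S S] [IsScalarTower K S S]

/-- The polynomial algebra `S[t]` over the (possibly nonunital, noncommutative)
`K`-algebra `S`, realized as the non-unital subalgebra of `(Unitization K S)[t]`
consisting of polynomials all of whose coefficients lie in `S`. -/
def polyS : NonUnitalSubalgebra K (Polynomial (Unitization K S)) where
  carrier := {p | ∀ n, (p.coeff n).fst = 0}
  add_mem' := by intro a b ha hb n; simp [ha n, hb n]
  zero_mem' := by intro n; simp
  mul_mem' := by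
    intro a b ha hb n
    rw [Set.mem_setOf_eq] at *
    rw [Polynomial.coeff_mul]
    have : ∀ (s : Finset (ℕ × ℕ)) (f : ℕ × ℕ → Unitization K S),
        (∑ x ∈ s, f x).fst = ∑ x ∈ s, (f x).fst := by
      intro s f
      induction s using Finset.cons_induction with
      | empty => simp
      | cons a t hat ih => rw [Finset.sum_cons, Finset.sum_cons, Unitization.fst_add, ih]
    rw [this]
    exact Finset.sum_eq_zero fun p _ => by rw [Unitization.fst_mul, ha p.1, zero_mul]
  smul_mem' := by intro c x hx n; simp [hx n]

variable {K S}

/-- The element `s·tⁿ` of `S[t]`. -/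
def polyS.single (n : ℕ) (s : S) : polyS K S :=
  ⟨Polynomial.monomial n (Unitization.inr s), by
    intro k
    simp only [Polynomial.coeff_monomial]
    split <;> simp⟩

/-- The formal derivative `d/dt` on `S[t]`. -/
def polyS.deriv (p : polyS K S) : polyS K S :=
  ⟨Polynomial.derivative (p : Polynomial (Unitization K S)), by
    intro n
    have h : ∀ k, ((p : Polynomial (Unitization K S)).coeff k).fst = 0 := p.2
    rw [Polynomial.coeff_derivative, Unitization.fst_mul, h (n + 1), zero_mul]⟩

/-- The bracket `⟨a,b⟩ := b′a − a′b` on `S[t]`. -/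
def polyS.bracket (a b : polyS K S) : polyS K S :=
  polyS.deriv b * a - polyS.deriv a * b

/-! The bracket `⟨a,b⟩ = D b · a - D a · b` makes sense for any additive map `D` on a ring; it is
always anticommutative and bilinear when `D` is linear. When `D` satisfies the Leibniz rule, all
terms of the Jacobi sum cancel except `D²a (bc - cb) + D²b (ca - ac) + D²c (ab - ba)`. In `S[t]` with
`D = d/dt` these vanish: a commutator in the unitization `K ⊕ S` is the commutator of the `S`-parts,
so `S[S,S] = 0` says that a polynomial with coefficients in `S` annihilates every commutator of
`(K ⊕ S)[t]`, monomial by monomial. -/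

section DerivBracket

variable {A : Type*} [NonUnitalRing A]

def derivBracket (D : A → A) (a b : A) : A := D b * a - D a * b

theorem derivBracket_anticomm (D : A → A) (a b : A) :
    derivBracket D a b = -derivBracket D b a :=
  (neg_sub _ _).symm

theorem derivBracket_jacobi {F : Type*} [FunLike F A A] [AddMonoidHomClass F A A] (D : F)
    (hD : ∀ x y, D (x * y) = D x * y + x * D y) (a b c : A) :
    derivBracket D (derivBracket D a b) c + derivBracket D (derivBracket D b c) a
        + derivBracket D (derivBracket D c a) b =
      D (D a) * (b * c - c * b) + D (D b) * (c * a - a * c) + D (D c) * (a * b - b * a) := by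
  simp only [derivBracket, map_sub, hD]
  noncomm_ring

variable {R F : Type*} [Semiring R] [Module R A] [SMulCommClass R A A] [IsScalarTower R A A]
  [FunLike F A A] [LinearMapClass F R A A]

theorem derivBracket_smul_add_left (D : F) (k : R) (a a' b : A) :
    derivBracket D (k • a + a') b = k • derivBracket D a b + derivBracket D a' b := by
  simp only [derivBracket, map_add, map_smul, mul_add, add_mul, mul_smul_comm, smul_mul_assoc,
    smul_sub]
  abel

theorem derivBracket_smul_add_right (D : F) (k : R) (a b b' : A) :
    derivBracket D a (k • b + b') = k • derivBracket D a b + derivBracket D a b' := by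
  rw [derivBracket_anticomm, derivBracket_smul_add_left, derivBracket_anticomm _ a b,
    derivBracket_anticomm _ a b', smul_neg, neg_add]

end DerivBracket

namespace Unitization

variable {R A : Type*} [CommRing R] [NonUnitalRing A] [Module R A]

theorem mul_sub_mul_eq_inr (u v : Unitization R A) :
    u * v - v * u = inr (u.snd * v.snd - v.snd * u.snd) := by
  refine Unitization.ext ?_ ?_
  · simp [sub_eq_add_neg, mul_comm]
  · simp [sub_eq_add_neg]
    abel

theorem mul_commutator_eq_zero_of_fst_eq_zero (hA : ∀ s u v : A, s * (u * v - v * u) = 0)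
    {x : Unitization R A} (hx : x.fst = 0) (u v : Unitization R A) :
    x * (u * v - v * u) = 0 := by
  have hx' : x = inr x.snd := Unitization.ext hx rfl
  rw [mul_sub_mul_eq_inr, hx', ← inr_mul, hA, inr_zero]

end Unitization

theorem Polynomial.mul_commutator_eq_zero {R : Type*} [Ring R] {p : Polynomial R}
    (hp : ∀ n (u v : R), p.coeff n * (u * v - v * u) = 0) (q r : Polynomial R) :
    p * (q * r - r * q) = 0 := by
  induction q using Polynomial.induction_on' with
  | add f g hf hg => rw [add_mul, mul_add, add_sub_add_comm, mul_add, hf, hg, add_zero]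
  | monomial j u =>
    induction r using Polynomial.induction_on' with
    | add f g hf hg => rw [mul_add, add_mul, add_sub_add_comm, mul_add, hf, hg, add_zero]
    | monomial k v =>
      have hC : p * Polynomial.C (u * v - v * u) = 0 := by
        ext n
        rw [Polynomial.coeff_mul_C, hp, Polynomial.coeff_zero]
      rw [Polynomial.monomial_mul_monomial, Polynomial.monomial_mul_monomial, add_comm k j,
        ← map_sub, ← Polynomial.C_mul_X_pow_eq_monomial, ← mul_assoc, hC, zero_mul]

namespace polyS

variable {K S : Type*} [Field K] [NonUnitalRing S] [Module K S]
  [SMulCommClass K S S] [IsScalarTower K S S]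

theorem mul_commutator_eq_zero (hS : ∀ s u v : S, s * (u * v - v * u) = 0)
    (p q r : polyS K S) : p * (q * r - r * q) = 0 :=
  Subtype.ext <| Polynomial.mul_commutator_eq_zero
    (fun n => Unitization.mul_commutator_eq_zero_of_fst_eq_zero hS (p.2 n)) q r

def derivₗ : polyS K S →ₗ[K] polyS K S where
  toFun := polyS.deriv
  map_add' _ _ := Subtype.ext (Polynomial.derivative_add ..)
  map_smul' _ _ := Subtype.ext (Polynomial.derivative_smul ..)

theorem derivₗ_mul (p q : polyS K S) : derivₗ (p * q) = derivₗ p * q + p * derivₗ q :=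
  Subtype.ext (Polynomial.derivative_mul ..)

end polyS

theorem statement14_general {K : Type*} [Field K]
    {S : Type*} [NonUnitalRing S] [Module K S] [SMulCommClass K S S] [IsScalarTower K S S]
    (hS : ∀ s u v : S, s * (u * v - v * u) = 0) :
    (∀ (k : K) (a a' b : polyS K S),
      polyS.bracket (k • a + a') b = k • polyS.bracket a b + polyS.bracket a' b) ∧
    (∀ (k : K) (a b b' : polyS K S),
      polyS.bracket a (k • b + b') = k • polyS.bracket a b + polyS.bracket a b') ∧
    (∀ a b : polyS K S, polyS.bracket a b = - polyS.bracket b a) ∧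
    (∀ a b c : polyS K S,
      polyS.bracket (polyS.bracket a b) c + polyS.bracket (polyS.bracket b c) a
          + polyS.bracket (polyS.bracket c a) b = 0) := by
  have hbracket : (polyS.bracket : polyS K S → polyS K S → polyS K S) =
      derivBracket polyS.derivₗ := rfl
  simp only [hbracket]
  refine ⟨derivBracket_smul_add_left _, derivBracket_smul_add_right _, derivBracket_anticomm _,
    fun a b c => ?_⟩
  rw [derivBracket_jacobi _ (polyS.derivₗ_mul (K := K) (S := S))]
  simp only [polyS.mul_commutator_eq_zero hS, add_zero]

/-- If `S[S,S] = 0`, then `⟨a,b⟩ := b′a − a′b` is a Lie bracket on `S[t]`: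
it is `K`-bilinear, antisymmetric, and satisfies the Jacobi identity. -/
theorem statement14 {K : Type*} [Field K] [CharZero K]
    {S : Type*} [NonUnitalRing S] [Module K S] [SMulCommClass K S S] [IsScalarTower K S S]
    (hS : ∀ s u v : S, s * (u * v - v * u) = 0) :
    (∀ (k : K) (a a' b : polyS K S),
      polyS.bracket (k • a + a') b = k • polyS.bracket a b + polyS.bracket a' b) ∧
    (∀ (k : K) (a b b' : polyS K S),
      polyS.bracket a (k • b + b') = k • polyS.bracket a b + polyS.bracket a b') ∧
    (∀ a b : polyS K S, polyS.bracket a b = - polyS.bracket b a) ∧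
    (∀ a b c : polyS K S,
      polyS.bracket (polyS.bracket a b) c + polyS.bracket (polyS.bracket b c) a
          + polyS.bracket (polyS.bracket c a) b = 0) :=
  statement14_general hS

end
end

section
/- The Lie algebra (S[t], ⟨a,b⟩ := b′a − a′b) is not Wronskian special: there exist no commutative K-algebra Φ, K-linear derivation d : Φ → Φ, and injective K-linear map φ : S[t] → Φ such that φ(b′a − a′b) = d(φ(b))·φ(a) − d(φ(a))·φ(b) for all a, b ∈ S[t]. -/
/-- The two–dimensional nonunital associative `K`-algebra with basis `{e,v}`,
`e·e = e`, `e·v = 0`, `v·e = v`, `v·v = 0`, realized on `K × K` via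
`(α,β)·(γ,δ) = (αγ, βγ)`, with `e = (1,0)`, `v = (0,1)`. -/
def SAlg (K : Type*) := K × K

namespace SAlg

variable {K : Type*} [Field K]

instance : AddCommGroup (SAlg K) := inferInstanceAs (AddCommGroup (K × K))
instance : Module K (SAlg K) := inferInstanceAs (Module K (K × K))

instance : Mul (SAlg K) :=
  ⟨fun x y => (((x : K × K).1 * (y : K × K).1, (x : K × K).2 * (y : K × K).1) : K × K)⟩

lemma mul_fst (x y : SAlg K) : (x * y).1 = (x : K × K).1 * (y : K × K).1 := rfl
lemma mul_snd (x y : SAlg K) : (x * y).2 = (x : K × K).2 * (y : K × K).1 := rfl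
lemma add_fst (x y : SAlg K) : (x + y).1 = (x : K × K).1 + (y : K × K).1 := rfl
lemma add_snd (x y : SAlg K) : (x + y).2 = (x : K × K).2 + (y : K × K).2 := rfl
lemma zero_fst : ((0 : SAlg K) : K × K).1 = 0 := rfl
lemma zero_snd : ((0 : SAlg K) : K × K).2 = 0 := rfl
lemma smul_fst (k : K) (x : SAlg K) : ((k • x : SAlg K) : K × K).1 = k • (x : K × K).1 := rfl
lemma smul_snd (k : K) (x : SAlg K) : ((k • x : SAlg K) : K × K).2 = k • (x : K × K).2 := rfl

instance : NonUnitalRing (SAlg K) :=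
  { (inferInstance : AddCommGroup (SAlg K)) with
    mul := (· * ·)
    left_distrib := fun a b c => by
      apply Prod.ext <;> simp [mul_fst, mul_snd, add_fst, add_snd, mul_add]
    right_distrib := fun a b c => by
      apply Prod.ext <;> simp [mul_fst, mul_snd, add_fst, add_snd, add_mul]
    zero_mul := fun a => by
      apply Prod.ext <;> simp [mul_fst, mul_snd, zero_fst, zero_snd]
    mul_zero := fun a => by
      apply Prod.ext <;> simp [mul_fst, mul_snd, zero_fst, zero_snd]
    mul_assoc := fun a b c => by
      apply Prod.ext <;> simp [mul_fst, mul_snd, mul_assoc] }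

instance : SMulCommClass K (SAlg K) (SAlg K) :=
  ⟨fun k x y => by apply Prod.ext <;> simp [mul_fst, mul_snd, smul_fst, smul_snd, smul_eq_mul] <;> ring⟩

instance : IsScalarTower K (SAlg K) (SAlg K) :=
  ⟨fun k x y => by apply Prod.ext <;> simp [mul_fst, mul_snd, smul_fst, smul_snd, mul_assoc]⟩

/-- The basis element `e`. -/
def e : SAlg K := ((1, 0) : K × K)

/-- The basis element `v`. -/
def v : SAlg K := ((0, 1) : K × K)

end SAlg

/-! Every Wronskian bracket `⟨x, y⟩ = d(y)·x − d(x)·y` satisfies the cyclic identity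
`⟨x, y⟩z + ⟨y, z⟩x + ⟨z, x⟩y = 0`. Applied to the images of `e tᵐ, e tⁿ, v tᵏ` it gives
linear relations among the products `φ(e tⁱ)·φ(v tʲ)` which force those of low degree to
vanish. Whenever `φ(e tⁿ)·φ(v t) = 0`, the Leibniz rule turns `⟨φ(e tⁿ), φ(v t)⟩ = φ(v tⁿ)`
into `φ(v tⁿ) = φ(e tⁿ)·w` with `w = 2 d(φ(v t))`. Substituting this into
`⟨φ(e), φ(v t²)⟩ = 2φ(v t)` and `⟨φ(e t²), φ(v)⟩ = 0` and subtracting leaves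
`2φ(v t) = 2w⟨φ(e), φ(e t²)⟩ = 4φ(e t)·w = 4φ(v t)`, so `φ(v t) = 0`, against injectivity. -/

section Wronskian

variable {R : Type*} [CommRing R]

def wronskian (d : R → R) (x y : R) : R :=
  d y * x - d x * y

lemma wronskian_swap (d : R → R) (x y : R) : wronskian d y x = -wronskian d x y := by
  unfold wronskian; ring

lemma wronskian_cyclic (d : R → R) (x y z : R) :
    wronskian d x y * z + wronskian d y z * x + wronskian d z x * y = 0 := by
  unfold wronskian; ring

lemma wronskian_eq_two_mul_of_mul_eq_zero {d : R → R}
    (hd : ∀ x y, d (x * y) = d x * y + x * d y) {x y : R} (hxy : x * y = 0) :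
    wronskian d x y = x * (2 * d y) := by
  have hd0 : d 0 = 0 := by simpa using hd 0 0
  have hdxy : d x * y + x * d y = 0 := by rw [← hd, hxy, hd0]
  unfold wronskian
  linear_combination -hdxy

end Wronskian

lemma eq_zero_of_natCast_mul_eq_zero (K : Type*) {A : Type*} [Field K] [CharZero K]
    [Ring A] [Algebra K A] {n : ℕ} (hn : n ≠ 0) {x : A} (h : (n : A) * x = 0) : x = 0 := by
  have hunit : IsUnit (n : A) := by
    rw [← map_natCast (algebraMap K A)]
    exact (isUnit_iff_ne_zero.mpr (Nat.cast_ne_zero.mpr hn)).map _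
  exact hunit.mul_right_eq_zero.mp h

namespace SAlg

variable {K : Type*} [Field K]

lemma e_mul_e : (e : SAlg K) * e = e := by
  apply Prod.ext <;> simp only [mul_fst, mul_snd] <;> simp [e]

lemma e_mul_v : (e : SAlg K) * v = 0 := by
  apply Prod.ext <;> simp only [mul_fst, mul_snd, zero_fst, zero_snd] <;> simp [e, v]

lemma v_mul_e : (v : SAlg K) * e = v := by
  apply Prod.ext <;> simp only [mul_fst, mul_snd] <;> simp [e, v]

lemma v_ne_zero : (v : SAlg K) ≠ 0 := by
  intro h
  simpa [v, zero_snd] using congrArg (fun x : SAlg K => (x : K × K).2) h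

end SAlg

namespace polyS

section

variable {K : Type*} [Field K] {S : Type*} [NonUnitalRing S] [Module K S] [SMulCommClass K S S]
  [IsScalarTower K S S]

lemma coe_single (n : ℕ) (s : S) :
    ((single n s : polyS K S) : Polynomial (Unitization K S))
      = Polynomial.monomial n (Unitization.inr s) := rfl

lemma single_smul (k : K) (n : ℕ) (s : S) :
    (single n (k • s) : polyS K S) = k • single n s := by
  apply Subtype.ext
  rw [SetLike.val_smul, coe_single, coe_single, Unitization.inr_smul, Polynomial.smul_monomial]

lemma single_ne_zero (n : ℕ) {s : S} (hs : s ≠ 0) : (single n s : polyS K S) ≠ 0 := by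
  intro h
  have hcoeff := congrArg (fun p : polyS K S => ((p : Polynomial (Unitization K S)).coeff n).snd) h
  exact hs (by simpa [coe_single] using hcoeff)

lemma derivative_monomial_inr (n : ℕ) (s : S) :
    Polynomial.derivative (Polynomial.monomial n (Unitization.inr s : Unitization K S))
      = Polynomial.monomial (n - 1) (Unitization.inr ((n : K) • s)) := by
  rw [Polynomial.derivative_monomial, ← map_natCast (algebraMap K (Unitization K S)),
    Unitization.algebraMap_eq_inl, Unitization.inr_mul_inl]

lemma bracket_single (m n : ℕ) (x y : S) :
    bracket (single m x) (single n y)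
      = (single (m + n - 1) ((n : K) • (y * x) - (m : K) • (x * y)) : polyS K S) := by
  apply Subtype.ext
  change Polynomial.derivative (Polynomial.monomial n _) * Polynomial.monomial m _
      - Polynomial.derivative (Polynomial.monomial m _) * Polynomial.monomial n _ = _
  rw [derivative_monomial_inr, derivative_monomial_inr, Polynomial.monomial_mul_monomial,
    Polynomial.monomial_mul_monomial, ← Unitization.inr_mul, ← Unitization.inr_mul]
  simp only [smul_mul_assoc]
  rcases m with _ | m <;> rcases n with _ | n <;>
    simp [coe_single, Unitization.inr_sub, add_comm, add_left_comm]

end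

variable {K : Type*} [Field K]

lemma bracket_single_e_single_e (m n : ℕ) :
    bracket (single m SAlg.e) (single n SAlg.e)
      = ((n : K) - m) • (single (m + n - 1) SAlg.e : polyS K (SAlg K)) := by
  rw [bracket_single, SAlg.e_mul_e, ← sub_smul, single_smul]

lemma bracket_single_e_single_v (m n : ℕ) :
    bracket (single m SAlg.e) (single n SAlg.v)
      = (n : K) • (single (m + n - 1) SAlg.v : polyS K (SAlg K)) := by
  rw [bracket_single, SAlg.e_mul_v, SAlg.v_mul_e, smul_zero, sub_zero, single_smul]

section

open SAlg (e v)

variable {Φ : Type*} [CommRing Φ] [Algebra K Φ] {d : Φ → Φ}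
  {φ : polyS K (SAlg K) →ₗ[K] Φ} (hφ : ∀ a b, φ (bracket a b) = wronskian d (φ a) (φ b))
include hφ

lemma wronskian_single_e_single_e (m n : ℕ) :
    wronskian d (φ (single m e)) (φ (single n e))
      = ((n : Φ) - m) * φ (single (m + n - 1) e) := by
  rw [← hφ, bracket_single_e_single_e, map_smul, Algebra.smul_def, map_sub, map_natCast,
    map_natCast]

lemma wronskian_single_e_single_v (m n : ℕ) :
    wronskian d (φ (single m e)) (φ (single n v)) = n * φ (single (m + n - 1) v) := by
  rw [← hφ, bracket_single_e_single_v, map_smul, Algebra.smul_def, map_natCast]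

lemma single_e_mul_single_v_relation (m n k : ℕ) :
    ((n : Φ) - m) * (φ (single (m + n - 1) e) * φ (single k v))
      + k * (φ (single m e) * φ (single (n + k - 1) v)
        - φ (single n e) * φ (single (m + k - 1) v)) = 0 := by
  have h := wronskian_cyclic d (φ (single m e)) (φ (single n e)) (φ (single k v))
  rw [wronskian_swap d (φ (single m e)) (φ (single k v)), wronskian_single_e_single_e hφ,
    wronskian_single_e_single_v hφ, wronskian_single_e_single_v hφ] at h
  linear_combination h

lemma single_v_eq_of_mul_single_v_one_eq_zero (hd : ∀ x y, d (x * y) = d x * y + x * d y)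
    {n : ℕ} (hn : φ (single n e) * φ (single 1 v) = 0) :
    φ (single n v) = φ (single n e) * (2 * d (φ (single 1 v))) := by
  have h := wronskian_single_e_single_v hφ n 1
  rw [wronskian_eq_two_mul_of_mul_eq_zero hd hn, Nat.cast_one, one_mul, Nat.add_sub_cancel] at h
  exact h.symm

variable [CharZero K]

lemma single_e_mul_single_v_zero_eq_zero (j : ℕ) : φ (single j e) * φ (single 0 v) = 0 := by
  have h := single_e_mul_single_v_relation hφ 0 (j + 1) 0
  simp only [Nat.cast_zero, sub_zero, zero_add, Nat.add_sub_cancel, zero_mul, add_zero] at h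
  exact eq_zero_of_natCast_mul_eq_zero K (Nat.succ_ne_zero j) h

lemma single_e_mul_single_v_eq_zero_of_add_le_two :
    φ (single 0 e) * φ (single 1 v) = 0 ∧ φ (single 1 e) * φ (single 1 v) = 0 ∧
      φ (single 0 e) * φ (single 2 v) = 0 := by
  have r011 := single_e_mul_single_v_relation hφ 0 1 1
  have r021 := single_e_mul_single_v_relation hφ 0 2 1
  have r012 := single_e_mul_single_v_relation hφ 0 1 2
  have p10 := single_e_mul_single_v_zero_eq_zero hφ 1
  have p20 := single_e_mul_single_v_zero_eq_zero hφ 2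
  norm_num at r011 r021 r012
  have p02 : φ (single 0 e) * φ (single 2 v) = 0 :=
    eq_zero_of_natCast_mul_eq_zero K (n := 4) (by norm_num)
      (by linear_combination r021 + r012 + p20)
  refine ⟨eq_zero_of_natCast_mul_eq_zero K (n := 2) (by norm_num)
      (by linear_combination r011 + p10), ?_, p02⟩
  exact eq_zero_of_natCast_mul_eq_zero K (n := 2) (by norm_num)
    (by linear_combination r021 - p02 + p20)

lemma single_e_two_mul_single_v_one_eq_zero : φ (single 2 e) * φ (single 1 v) = 0 := by
  have r121 := single_e_mul_single_v_relation hφ 1 2 1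
  have r013 := single_e_mul_single_v_relation hφ 0 1 3
  have r031 := single_e_mul_single_v_relation hφ 0 3 1
  have p30 := single_e_mul_single_v_zero_eq_zero hφ 3
  norm_num at r121 r013 r031
  have p03 : φ (single 0 e) * φ (single 3 v) = 0 :=
    eq_zero_of_natCast_mul_eq_zero K (n := 4) (by norm_num) (by linear_combination r013 + 3 * r121)
  exact eq_zero_of_natCast_mul_eq_zero K (n := 3) (by norm_num)
    (by linear_combination r031 - p03 + p30)

lemma single_v_one_eq_zero (hd : ∀ x y, d (x * y) = d x * y + x * d y) : φ (single 1 v) = 0 := by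
  obtain ⟨p01, p11, p02⟩ := single_e_mul_single_v_eq_zero_of_add_le_two hφ
  have p20 := single_e_mul_single_v_zero_eq_zero hφ 2
  have hv0 := single_v_eq_of_mul_single_v_one_eq_zero hφ hd p01
  have hv1 := single_v_eq_of_mul_single_v_one_eq_zero hφ hd p11
  have hv2 :=
    single_v_eq_of_mul_single_v_one_eq_zero hφ hd (single_e_two_mul_single_v_one_eq_zero hφ)
  have h02 := wronskian_eq_two_mul_of_mul_eq_zero hd p02
  have h20 := wronskian_eq_two_mul_of_mul_eq_zero hd p20
  have h_ee := wronskian_single_e_single_e hφ 0 2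
  rw [wronskian_single_e_single_v hφ, hv2, hd] at h02
  rw [wronskian_single_e_single_v hφ, hv0, hd] at h20
  norm_num [wronskian] at h02 h20 h_ee
  exact eq_zero_of_natCast_mul_eq_zero K (n := 2) (by norm_num)
    (by linear_combination -h02 + h20 - 2 * (2 * d (φ (single 1 v))) * h_ee + 4 * hv1)

end

end polyS

universe u_1 u_2

/-- The Lie algebra `(S[t], ⟨a,b⟩ = b′a − a′b)`, for `S` the algebra spanned by `e, v`
with `ee = e, ev = 0, ve = v, vv = 0`, is not Wronskian special: there are no
commutative `K`-algebra `Φ`, `K`-linear derivation `d : Φ → Φ` and injective `K`-linear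
map `φ : S[t] → Φ` with `φ(b′a − a′b) = d(φ b)·φ a − d(φ a)·φ b` for all `a, b`. -/
theorem statement15 (K : Type*) [Field K] [CharZero K] :
    ∀ (Φ : Type*) [CommRing Φ] [Algebra K Φ] (d : Φ →ₗ[K] Φ),
      (∀ x y : Φ, d (x * y) = d x * y + x * d y) →
      ∀ φ : polyS K (SAlg K) →ₗ[K] Φ, Function.Injective φ →
        ¬ (∀ a b : polyS K (SAlg K),
            φ (polyS.bracket a b) = d (φ b) * φ a - d (φ a) * φ b) := by
  intro Φ _ _ d hd φ hφ_inj hφ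
  have hv1 : φ (polyS.single 1 SAlg.v) = φ 0 := by
    rw [polyS.single_v_one_eq_zero hφ hd, map_zero]
  exact polyS.single_ne_zero 1 SAlg.v_ne_zero (hφ_inj hv1)
end
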